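/- Löb's Theorem: let Prb be a predicate obeying the derivability conditions for a theory T that represents every computable function. Then for any sentence A, if T ⊢ Prb(⌜A⌝) → A, then T ⊢ A. -/

import Mathlib

open FirstOrder FirstOrder.Language

/-- Function symbols of the language of arithmetic `{0, S, +, ×}`. -/
inductive ArithFunc : ℕ → Type
  | zero : ArithFunc 0
  | succ : ArithFunc 1
  | add : ArithFunc 2
  | mul : ArithFunc 2

/-- The first-order language of arithmetic. -/
def L : Language := ⟨ArithFunc, fun _ => Empty⟩

/-- The term `0`. -/
def zeroT {α : Type} : L.Term α := Constants.term ArithFunc.zero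

/-- The term `S t`. -/
def succT {α : Type} (t : L.Term α) : L.Term α := Functions.apply₁ ArithFunc.succ t

/-- The term `s + t`. -/
def addT {α : Type} (s t : L.Term α) : L.Term α := Functions.apply₂ ArithFunc.add s t

/-- The term `s × t`. -/
def mulT {α : Type} (s t : L.Term α) : L.Term α := Functions.apply₂ ArithFunc.mul s t

/-- The numeral `n̄ = S … S 0`. -/
def num {α : Type} : ℕ → L.Term α
  | 0 => zeroT
  | n + 1 => succT (num n)

/-- The `i`-th bounded variable as a term. -/
def v {α : Type} {n : ℕ} (i : Fin n) : L.Term (α ⊕ Fin n) := Term.var (Sum.inr i)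

/-- The ordering `s < t := ∃ z, S z + s = t`. -/
def ltF {α : Type} {n : ℕ} (s t : L.Term (α ⊕ Fin n)) : L.BoundedFormula α n :=
  BoundedFormula.ex
    (Term.bdEqual
      (addT (succT (Term.var (Sum.inr (Fin.last n)))) (s.relabel (Sum.map id Fin.castSucc)))
      (t.relabel (Sum.map id Fin.castSucc)))

/-- Axiom S0 : `∀ x, ¬ S x = 0`. -/
def axS0 : L.Sentence := ∀' ∼(Term.bdEqual (succT (v 0)) zeroT)

/-- Axiom S1 : `∀ x y, S x = S y → x = y`. -/
def axS1 : L.Sentence := ∀' ∀' (Term.bdEqual (succT (v 0)) (succT (v 1)) ⟹ Term.bdEqual (v 0) (v 1))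

/-- Axiom S2 : `∀ x, x = 0 ∨ ∃ y, S y = x`. -/
def axS2 : L.Sentence := ∀' (Term.bdEqual (v 0) zeroT ⊔ ∃' (Term.bdEqual (succT (v 1)) (v 0)))

/-- Axiom A0 : `∀ x, x + 0 = x`. -/
def axA0 : L.Sentence := ∀' (Term.bdEqual (addT (v 0) zeroT) (v 0))

/-- Axiom A1 : `∀ x y, x + S y = S (x + y)`. -/
def axA1 : L.Sentence := ∀' ∀' (Term.bdEqual (addT (v 0) (succT (v 1))) (succT (addT (v 0) (v 1))))

/-- Axiom M0 : `∀ x, x × 0 = 0`. -/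
def axM0 : L.Sentence := ∀' (Term.bdEqual (mulT (v 0) zeroT) zeroT)

/-- Axiom M1 : `∀ x y, x × S y = x + (x × y)`. -/
def axM1 : L.Sentence := ∀' ∀' (Term.bdEqual (mulT (v 0) (succT (v 1))) (addT (v 0) (mulT (v 0) (v 1))))

/-- Robinson Arithmetic. -/
def Q : L.Theory := {axS0, axS1, axS2, axA0, axA1, axM0, axM1}

/-- The induction axiom for the formula `φ` with one (bounded) variable:
`(φ(0) ∧ ∀ x, φ(x) → φ(S x)) → ∀ x, φ(x)`. -/
def indAx (φ : L.BoundedFormula Empty 1) : L.Sentence :=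
  ((∀' (Term.bdEqual (v 0) zeroT ⟹ φ)) ⊓
      ∀' (φ ⟹ ∀' (Term.bdEqual (v 1) (succT (v 0)) ⟹ φ.liftAt 1 0))) ⟹ ∀' φ

/-- Peano Arithmetic: Robinson arithmetic plus the induction schema. -/
def PA : L.Theory := Q ∪ Set.range indAx

/-- `∃! y, ψ(y)`, for `ψ` with one bounded variable. -/
def exUnique (ψ : L.BoundedFormula Empty 1) : L.Sentence :=
  ∃' (ψ ⊓ ∀' (ψ.liftAt 1 0 ⟹ Term.bdEqual (v 1) (v 0)))

/-- `φ(x̄⃗, ȳ)`: the result of substituting the numerals of `xs` and `y` for the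
free variables of `φ`. -/
def appNum {α : Type} (φ : L.Formula (α ⊕ Fin 1)) (xs : α → ℕ) (y : ℕ) : L.Sentence :=
  φ.subst (Sum.elim (fun i => num (xs i)) (fun _ => num y))

/-- `φ(x̄⃗, y)` with the numerals of `xs` substituted for the input variables and the
output variable `y` left as a bounded variable. -/
def outFormula {α : Type} (φ : L.Formula (α ⊕ Fin 1)) (xs : α → ℕ) : L.BoundedFormula Empty 1 :=
  (BoundedFormula.relabel (β := α) (n := 1)
      (Sum.elim (fun i => Sum.inl i) (fun _ => Sum.inr 0)) φ).subst (fun i => num (xs i))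

/-- `f` is represented in `T` by the formula `φ`: whenever `f xs = y`, the theory `T` proves
`(∃! y, φ(x̄⃗, y)) ∧ φ(x̄⃗, ȳ)`. -/
def RepresentsBy (T : L.Theory) {α : Type} (f : (α → ℕ) → ℕ) (φ : L.Formula (α ⊕ Fin 1)) : Prop :=
  ∀ (xs : α → ℕ) (y : ℕ), f xs = y →
    T ⊨ᵇ (exUnique (outFormula φ xs) ⊓ appNum φ xs y : L.Sentence)

/-- `f` is representable in `T`. -/
def Represents (T : L.Theory) {α : Type} (f : (α → ℕ) → ℕ) : Prop :=
  ∃ φ : L.Formula (α ⊕ Fin 1), RepresentsBy T f φ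

instance : Encodable (Σ n, L.Functions n) where
  encode x := match x with
    | ⟨_, ArithFunc.zero⟩ => 0
    | ⟨_, ArithFunc.succ⟩ => 1
    | ⟨_, ArithFunc.add⟩ => 2
    | ⟨_, ArithFunc.mul⟩ => 3
  decode n := match n with
    | 0 => some ⟨0, ArithFunc.zero⟩
    | 1 => some ⟨1, ArithFunc.succ⟩
    | 2 => some ⟨2, ArithFunc.add⟩
    | 3 => some ⟨2, ArithFunc.mul⟩
    | _ => none
  encodek := by rintro ⟨n, f⟩; cases f <;> rfl

instance : Encodable (Σ n, L.Relations n) where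
  encode x := x.2.elim
  decode _ := none
  encodek x := x.2.elim

/-- A fixed effective Gödel coding of sentences as natural numbers. -/
def code (A : L.Sentence) : ℕ := Encodable.encode A.listEncode

/-- `P(n̄)` : the predicate `P` applied to the numeral of `n`. -/
def papp (P : L.Formula (Fin 1)) (m : ℕ) : L.Sentence := P.subst (fun _ => num m)

/-- `P(⌜A⌝)` : the predicate `P` applied to the numeral of the code of the sentence `A`. -/
def pcode (P : L.Formula (Fin 1)) (A : L.Sentence) : L.Sentence := papp P (code A)

/-- The standard model `ℕ` of the language of arithmetic. -/
instance : L.Structure ℕ where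
  funMap f := match f with
    | ArithFunc.zero => fun _ => 0
    | ArithFunc.succ => fun x => x 0 + 1
    | ArithFunc.add => fun x => x 0 + x 1
    | ArithFunc.mul => fun x => x 0 * x 1
  RelMap r := r.elim

/-- Consistency of a theory: it does not prove both a sentence and its negation. -/
def Consistent (T : L.Theory) : Prop := ¬ ∃ A : L.Sentence, T ⊨ᵇ A ∧ T ⊨ᵇ (∼A : L.Sentence)

/-- A theory is computably enumerable: the set of codes of its theorems is c.e. -/
def TheoryCE (T : L.Theory) : Prop :=
  REPred fun n : ℕ => ∃ A : L.Sentence, code A = n ∧ T ⊨ᵇ A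


open Encodable

namespace LoebAux

/-- Raw token list of the numeral `num a` (relabelled into any `Empty ⊕ Fin k`). -/
def rawNum (a : ℕ) : List ℕ := List.replicate a 3 ++ [1]

def tstep (a u : ℕ) : List ℕ := if u = 0 then rawNum a else [u]

def tsub (a c : ℕ) : ℕ :=
  Encodable.encode (((Encodable.decode c : Option (List ℕ)).getD []).flatMap (tstep a))

def fstep (a e : ℕ) : ℕ :=
  if e % 2 = 0 then 2 * Nat.pair (e / 2).unpair.1 (tsub a ((e / 2).unpair.2)) else e

def dfun (a : ℕ) : ℕ :=
  Encodable.encode (((Encodable.decode a : Option (List ℕ)).getD []).map (fstep a))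

theorem rawNum_primrec : Primrec rawNum := by
  have h1 : Primrec (fun a => List.replicate a (3 : ℕ)) := by
    have := Primrec.list_map (Primrec.list_range) (Primrec₂.const (3 : ℕ))
    exact this.of_eq (fun a => by simp [List.map_const'])
  exact (Primrec.list_append.comp h1 (Primrec.const [1])).of_eq (fun a => rfl)

theorem tstep_primrec : Primrec₂ tstep := by
  have hcond : PrimrecPred (fun p : ℕ × ℕ => p.2 = 0) :=
    Primrec.eq.comp Primrec.snd (Primrec.const 0)
  exact (Primrec.ite hcond (rawNum_primrec.comp Primrec.fst) ((Primrec.list_cons.comp Primrec.snd (Primrec.const [])))).to₂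

theorem tsub_primrec : Primrec₂ tsub := by
  have hlist : Primrec (fun p : ℕ × ℕ => ((Encodable.decode p.2 : Option (List ℕ)).getD [])) :=
    Primrec.option_getD.comp (Primrec.decode.comp Primrec.snd) (Primrec.const [])
  have hfm : Primrec (fun p : ℕ × ℕ =>
      (((Encodable.decode p.2 : Option (List ℕ)).getD []).flatMap (tstep p.1))) :=
    Primrec.list_flatMap hlist (tstep_primrec.comp (Primrec.fst.comp Primrec.fst) Primrec.snd).to₂
  exact (Primrec.encode.comp hfm).to₂

theorem fstep_primrec : Primrec₂ fstep := by
  have hcond : PrimrecPred (fun p : ℕ × ℕ => p.2 % 2 = 0) :=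
    Primrec.eq.comp (Primrec.nat_mod.comp Primrec.snd (Primrec.const 2)) (Primrec.const 0)
  have hdiv : Primrec (fun p : ℕ × ℕ => p.2 / 2) :=
    Primrec.nat_div.comp Primrec.snd (Primrec.const 2)
  have hthen : Primrec (fun p : ℕ × ℕ =>
      2 * Nat.pair (p.2 / 2).unpair.1 (tsub p.1 ((p.2 / 2).unpair.2))) :=
    Primrec.nat_mul.comp (Primrec.const 2)
      (Primrec₂.natPair.comp (Primrec.fst.comp (Primrec.unpair.comp hdiv))
        (tsub_primrec.comp Primrec.fst (Primrec.snd.comp (Primrec.unpair.comp hdiv))))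
  exact (Primrec.ite hcond hthen Primrec.snd).to₂

theorem dfun_primrec : Primrec dfun := by
  have hlist : Primrec (fun a : ℕ => ((Encodable.decode a : Option (List ℕ)).getD [])) :=
    Primrec.option_getD.comp Primrec.decode (Primrec.const [])
  exact Primrec.encode.comp (Primrec.list_map hlist fstep_primrec)

theorem dfun_computable : Computable (fun xs : Fin 1 → ℕ => dfun (xs 0)) :=
  (dfun_primrec.comp (Primrec.fin_app.comp Primrec.id (Primrec.const 0))).to_comp

end LoebAux
namespace LoebAux

open Encodable FirstOrder FirstOrder.Language

theorem term_listEncode_subst {α β : Type} (g : α → L.Term β) (t : L.Term α) :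
    (t.subst g).listEncode =
      t.listEncode.flatMap
        (Sum.elim (fun a => (g a).listEncode) (fun F => [Sum.inr F])) := by
  induction t with
  | var a => simp [Term.subst, Term.listEncode]
  | func f ts ih =>
      simp only [Term.subst, Term.listEncode, List.flatMap_cons, Sum.elim_inr,
        List.flatMap_assoc, List.cons_append, List.nil_append, ih]

theorem bf_listEncode_mapTermRel {α β : Type}
    (ft : ∀ n, L.Term (α ⊕ Fin n) → L.Term (β ⊕ Fin n)) {n} (φ : L.BoundedFormula α n) :
    (φ.mapTermRel ft (fun _ => id) (fun _ => id)).listEncode =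
      φ.listEncode.map
        (Sum.map (fun x : Σ k, L.Term (α ⊕ Fin k) => ⟨x.1, ft x.1 x.2⟩) id) := by
  induction φ with
  | falsum => rfl
  | equal t₁ t₂ => rfl
  | rel R ts => exact R.elim
  | imp φ₁ φ₂ ih1 ih2 =>
      simp [BoundedFormula.mapTermRel, BoundedFormula.listEncode, ih1, ih2]
  | all φ ih =>
      simp [BoundedFormula.mapTermRel, BoundedFormula.listEncode, ih]

theorem bf_listEncode_subst {α β : Type} {n} (φ : L.BoundedFormula α n) (f : α → L.Term β) :
    (φ.subst f).listEncode =
      φ.listEncode.map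
        (Sum.map (fun x : Σ k, L.Term (α ⊕ Fin k) =>
          (⟨x.1, x.2.subst (Sum.elim (Term.relabel Sum.inl ∘ f) (Term.var ∘ Sum.inr))⟩ :
            Σ k, L.Term (β ⊕ Fin k))) id) :=
  bf_listEncode_mapTermRel _ φ

theorem encode_list_map {X : Type} [Encodable X] (l : List X) :
    Encodable.encode l = Encodable.encode (l.map Encodable.encode) := by
  induction l with
  | nil => rfl
  | cons a l ih => simp only [List.map_cons, Encodable.encode_list_cons, ih]; rfl

theorem rawNum_eq (a k : ℕ) :
    ((Term.relabel (Sum.inl : Empty → Empty ⊕ Fin k) (num a)).listEncode).map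
      Encodable.encode = rawNum a := by
  induction a with
  | zero =>
      rfl
  | succ a ih =>
      show ((Term.relabel _ (succT (num a))).listEncode).map _ = _
      simp only [succT, Functions.apply₁, Term.relabel, Term.listEncode, rawNum,
        List.replicate_succ, List.cons_append, List.map_cons, List.finRange_succ,
        List.finRange_zero, List.flatMap_cons, List.flatMap_nil, List.map_nil,
        List.append_nil, List.map_map] at ih ⊢
      refine congrArg₂ _ rfl ?_
      simpa using ih

/-- The substitution map used by `BoundedFormula.subst` at numerals. -/
def gsub (a k : ℕ) : (Fin 1 ⊕ Fin k) → L.Term (Empty ⊕ Fin k) :=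
  Sum.elim (Term.relabel Sum.inl ∘ fun _ => (num a : L.Term Empty)) (Term.var ∘ Sum.inr)

theorem term_raw (a k : ℕ) (t : L.Term (Fin 1 ⊕ Fin k)) :
    ((t.subst (gsub a k)).listEncode).map Encodable.encode =
      (t.listEncode.map Encodable.encode).flatMap (tstep a) := by
  rw [term_listEncode_subst, List.map_flatMap, List.flatMap_map]
  congr 1
  funext x
  rcases x with (i | j) | F
  · have hi : i = 0 := Subsingleton.elim _ _
    subst hi
    have e0 : (Encodable.encode
        (Sum.inl (Sum.inl (0 : Fin 1)) : (Fin 1 ⊕ Fin k) ⊕ (Σ i, L.Functions i))) = 0 := rfl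
    simp only [Function.comp_apply, e0, Sum.elim_inl, gsub, tstep, if_pos rfl]
    exact rawNum_eq a k
  · have e1 : (Encodable.encode
        (Sum.inl (Sum.inr j) : (Fin 1 ⊕ Fin k) ⊕ (Σ i, L.Functions i))) =
        2 * (2 * (j : ℕ) + 1) := rfl
    have e2 : (Encodable.encode
        (Sum.inl (Sum.inr j) : (Empty ⊕ Fin k) ⊕ (Σ i, L.Functions i))) =
        2 * (2 * (j : ℕ) + 1) := rfl
    simp [gsub, tstep, e1, e2, Term.listEncode]
  · have e1 : (Encodable.encode
        (Sum.inr F : (Fin 1 ⊕ Fin k) ⊕ (Σ i, L.Functions i))) =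
        2 * Encodable.encode F + 1 := rfl
    have e2 : (Encodable.encode
        (Sum.inr F : (Empty ⊕ Fin k) ⊕ (Σ i, L.Functions i))) =
        2 * Encodable.encode F + 1 := rfl
    simp [tstep, e1, e2]

theorem encode_term_eq {α : Type} [Encodable α] (t : L.Term α) :
    Encodable.encode t = Encodable.encode (t.listEncode.map Encodable.encode) := by
  rw [← encode_list_map]; rfl

theorem formula_raw (a : ℕ) {n : ℕ} (φ : L.BoundedFormula (Fin 1) n) :
    (((φ.subst fun _ => (num a : L.Term Empty)).listEncode).map Encodable.encode) =
      (φ.listEncode.map Encodable.encode).map (fstep a) := by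
  rw [bf_listEncode_subst, List.map_map, List.map_map]
  congr 1
  funext x
  rcases x with ⟨k, t⟩ | y
  · have e1 : (Encodable.encode
        (Sum.inl (⟨k, t⟩ : Σ k, L.Term (Fin 1 ⊕ Fin k)) :
          (Σ k, L.Term (Fin 1 ⊕ Fin k)) ⊕ ((Σ n, L.Relations n) ⊕ ℕ))) =
        2 * Nat.pair k (Encodable.encode t) := rfl
    have e2 : ∀ s : L.Term (Empty ⊕ Fin k), (Encodable.encode
        (Sum.inl (⟨k, s⟩ : Σ k, L.Term (Empty ⊕ Fin k)) :
          (Σ k, L.Term (Empty ⊕ Fin k)) ⊕ ((Σ n, L.Relations n) ⊕ ℕ))) =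
        2 * Nat.pair k (Encodable.encode s) := fun _ => rfl
    simp only [Function.comp_apply, Sum.map_inl, e1, e2, fstep, Nat.mul_mod_right,
      if_pos rfl, Nat.mul_div_cancel_left _ (by norm_num : (0:ℕ) < 2), Nat.unpair_pair]
    congr 2
    rw [tsub, encode_term_eq t, Encodable.encodek]
    simp only [Option.getD_some]
    show Encodable.encode (t.subst (gsub a k)) = _
    rw [encode_term_eq (t.subst (gsub a k)), term_raw a k t]
  · have e1 : (Encodable.encode
        (Sum.inr y : (Σ k, L.Term (Fin 1 ⊕ Fin k)) ⊕ ((Σ n, L.Relations n) ⊕ ℕ))) =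
        2 * Encodable.encode y + 1 := rfl
    have e2 : (Encodable.encode
        (Sum.inr y : (Σ k, L.Term (Empty ⊕ Fin k)) ⊕ ((Σ n, L.Relations n) ⊕ ℕ))) =
        2 * Encodable.encode y + 1 := rfl
    simp [fstep, e1, e2, Nat.mul_add_mod]

theorem dfun_code (φ : L.Formula (Fin 1)) :
    dfun (Encodable.encode (φ.listEncode.map Encodable.encode)) =
      code (papp φ (Encodable.encode (φ.listEncode.map Encodable.encode))) := by
  rw [dfun, Encodable.encodek]
  simp only [Option.getD_some]
  rw [code, encode_list_map ((papp φ _).listEncode), papp, formula_raw]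

end LoebAux
namespace LoebAux

open Encodable FirstOrder FirstOrder.Language

variable {M : Type} [L.Structure M]

/-- The value of the numeral `num m` does not depend on the valuation. -/
theorem realize_num_eq {α β : Type} (v : α → M) (w : β → M) (m : ℕ) :
    Term.realize v (num m) = Term.realize w (num m) := by
  induction m with
  | zero =>
      simp only [num, zeroT, Constants.term, Term.realize]
      exact congrArg _ (funext fun i => i.elim0)
  | succ m ih => simp [num, succT, Functions.apply₁, Term.realize, ih]

/-- The denotation of the numeral of `m` in `M`. -/
def den (M : Type) [L.Structure M] (m : ℕ) : M :=
  Term.realize (fun e : Empty => e.elim) (num m)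

theorem realize_num {α : Type} (v : α → M) (m : ℕ) :
    Term.realize v (num m) = den M m := realize_num_eq v _ m

theorem empty_fun_eq (v w : Empty → M) : v = w := funext fun e => e.elim

theorem snoc_empty (x : M) : (Fin.snoc (default : Fin 0 → M) x : Fin 1 → M) = ![x] := by
  funext i
  rw [Fin.eq_zero i]
  simp [Fin.snoc]

theorem realize_exUnique (ψ : L.BoundedFormula Empty 1) :
    M ⊨ exUnique ψ ↔
      ∃ x : M, ψ.Realize default ![x] ∧ ∀ y : M, ψ.Realize default ![y] → y = x := by
  rw [exUnique, Sentence.Realize, Formula.Realize, BoundedFormula.realize_ex]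
  refine exists_congr fun x => ?_
  rw [BoundedFormula.realize_inf, snoc_empty]
  refine and_congr Iff.rfl ?_
  rw [BoundedFormula.realize_all]
  refine forall_congr' fun y => ?_
  rw [BoundedFormula.realize_imp, BoundedFormula.realize_liftAt_one (Nat.zero_le 1),
    BoundedFormula.realize_bdEqual]
  have hs1 : (Fin.snoc ![x] y : Fin 2 → M) 1 = y := by
    rw [show (1 : Fin 2) = Fin.last 1 from rfl, Fin.snoc_last]
  have hs0 : (Fin.snoc ![x] y : Fin 2 → M) 0 = x := by
    rw [show (0 : Fin 2) = Fin.castSucc 0 from rfl, Fin.snoc_castSucc]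
    rfl
  have h1 : ((Fin.snoc (![x] : Fin 1 → M) y : Fin 2 → M) ∘
      fun i : Fin 1 => if (i : ℕ) < 0 then Fin.castSucc i else i.succ) = ![y] := by
    funext i
    rw [Subsingleton.elim i 0]
    simp [hs1]
  have h2 : Term.realize (Sum.elim (default : Empty → M) (Fin.snoc (![x] : Fin 1 → M) y))
      (v (1 : Fin 2)) = y := by simp [v, Term.realize, hs1]
  have h3 : Term.realize (Sum.elim (default : Empty → M) (Fin.snoc (![x] : Fin 1 → M) y))
      (v (0 : Fin 2)) = x := by simp [v, Term.realize, hs0]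
  rw [h1, h2, h3]

theorem realize_outFormula (Φ : L.Formula (Fin 1 ⊕ Fin 1)) (xs : Fin 1 → ℕ) (x : M) :
    (outFormula Φ xs).Realize (default : Empty → M) ![x] ↔
      Φ.Realize (Sum.elim (fun i => den M (xs i)) (fun _ => x)) := by
  rw [outFormula, BoundedFormula.realize_subst, BoundedFormula.realize_relabel]
  rw [Formula.Realize]
  refine iff_of_eq (congrArg₂ _ ?_ (Subsingleton.elim _ _))
  funext z
  rcases z with i | i
  · simp [realize_num]
  · simp [Subsingleton.elim i 0]

theorem realize_appNum (Φ : L.Formula (Fin 1 ⊕ Fin 1)) (xs : Fin 1 → ℕ) (y : ℕ) :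
    M ⊨ appNum Φ xs y ↔
      Φ.Realize (Sum.elim (fun i => den M (xs i)) (fun _ => den M y)) := by
  rw [appNum, Sentence.Realize, Formula.Realize, BoundedFormula.realize_subst]
  rw [show (Φ.Realize (Sum.elim (fun i => den M (xs i)) fun _ => den M y) : Prop) =
    BoundedFormula.Realize Φ (Sum.elim (fun i => den M (xs i)) fun _ => den M y) default from rfl]
  refine iff_of_eq (congrArg₂ _ ?_ (Subsingleton.elim _ _))
  funext z
  rcases z with i | i <;> simp [realize_num]

theorem realize_papp (P : L.Formula (Fin 1)) (m : ℕ) :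
    M ⊨ papp P m ↔ P.Realize (fun _ : Fin 1 => den M m) := by
  rw [papp, Sentence.Realize, Formula.Realize, BoundedFormula.realize_subst]
  rw [show (P.Realize (fun _ : Fin 1 => den M m) : Prop) =
    BoundedFormula.Realize P (fun _ : Fin 1 => den M m) default from rfl]
  refine iff_of_eq (congrArg₂ _ ?_ (Subsingleton.elim _ _))
  funext z
  simp [realize_num]

end LoebAux
namespace LoebAux

open Encodable FirstOrder FirstOrder.Language

variable {M : Type} [L.Structure M]

/-- `Φ(x, y)` with `y` made into the bounded variable `0`. -/
def PhiB (Φ : L.Formula (Fin 1 ⊕ Fin 1)) : L.BoundedFormula (Fin 1) 1 :=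
  BoundedFormula.relabel (Sum.elim (fun i => Sum.inl i) (fun _ => Sum.inr 0)) Φ

/-- `P(y)` with `y` made into the bounded variable `0`. -/
def PB (P : L.Formula (Fin 1)) : L.BoundedFormula (Fin 1) 1 :=
  BoundedFormula.relabel (fun _ : Fin 1 => Sum.inr (0 : Fin 1)) P

/-- The diagonal template `θ(x) = ∃ y (Φ(x,y) ∧ P(y))`. -/
def theta (Φ : L.Formula (Fin 1 ⊕ Fin 1)) (P : L.Formula (Fin 1)) : L.Formula (Fin 1) :=
  (PhiB Φ ⊓ PB P).ex

theorem realize_theta_papp (Φ : L.Formula (Fin 1 ⊕ Fin 1)) (P : L.Formula (Fin 1)) (a : ℕ) :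
    M ⊨ papp (theta Φ P) a ↔
      ∃ z : M, Φ.Realize (Sum.elim (fun _ : Fin 1 => den M a) (fun _ => z)) ∧
        P.Realize (fun _ : Fin 1 => z) := by
  rw [realize_papp, theta, Formula.Realize, BoundedFormula.realize_ex]
  refine exists_congr fun z => ?_
  rw [BoundedFormula.realize_inf, snoc_empty, PhiB, PB,
    BoundedFormula.realize_relabel, BoundedFormula.realize_relabel]
  refine and_congr ?_ ?_
  · rw [show (Φ.Realize (Sum.elim (fun _ : Fin 1 => den M a) (fun _ => z)) : Prop) =
      BoundedFormula.Realize Φ (Sum.elim (fun _ : Fin 1 => den M a) (fun _ => z)) default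
      from rfl]
    refine iff_of_eq (congrArg₂ _ ?_ (Subsingleton.elim _ _))
    funext w
    rcases w with i | i
    · simp
    · simp [Subsingleton.elim i 0]
  · rw [show (P.Realize (fun _ : Fin 1 => z) : Prop) =
      BoundedFormula.Realize P (fun _ : Fin 1 => z) default from rfl]
    refine iff_of_eq (congrArg₂ _ ?_ (Subsingleton.elim _ _))
    funext w
    simp

theorem sent_realize_imp (X Y : L.Sentence) :
    M ⊨ (X ⟹ Y : L.Sentence) ↔ (M ⊨ X → M ⊨ Y) :=
  BoundedFormula.realize_imp

theorem sent_realize_iff (X Y : L.Sentence) :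
    M ⊨ (X.iff Y : L.Sentence) ↔ (M ⊨ X ↔ M ⊨ Y) :=
  BoundedFormula.realize_iff

theorem sent_realize_inf (X Y : L.Sentence) :
    M ⊨ (X ⊓ Y : L.Sentence) ↔ (M ⊨ X ∧ M ⊨ Y) :=
  BoundedFormula.realize_inf

/-- The diagonal (fixed-point) lemma. -/
theorem diag (T : L.Theory)
    (hrep : ∀ (k : ℕ) (f : (Fin k → ℕ) → ℕ), Computable f → Represents T f)
    (P : L.Formula (Fin 1)) :
    ∃ S : L.Sentence, T ⊨ᵇ (S.iff (pcode P S) : L.Sentence) := by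
  obtain ⟨Φ, hΦ⟩ := hrep 1 _ dfun_computable
  set θ := theta Φ P with hθ
  set a := Encodable.encode (θ.listEncode.map Encodable.encode) with ha
  set S := papp θ a with hS
  have hb : dfun a = code S := dfun_code θ
  have hrepr := hΦ (fun _ => a) (code S) hb
  refine ⟨S, Theory.models_sentence_iff.2 fun M => ?_⟩
  have hM := Theory.models_sentence_iff.1 hrepr M
  rw [sent_realize_inf] at hM
  obtain ⟨hex, happ⟩ := hM
  rw [realize_exUnique] at hex
  obtain ⟨x, hx, hxu⟩ := hex
  rw [realize_outFormula] at hx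
  have hxu' : ∀ y : M, Φ.Realize (Sum.elim (fun _ : Fin 1 => den M a) (fun _ => y)) → y = x := by
    intro y hy
    exact hxu y ((realize_outFormula Φ (fun _ => a) y).2 hy)
  rw [realize_appNum] at happ
  have hbx : den M (code S) = x := hxu' _ happ
  rw [sent_realize_iff]
  constructor
  · intro hs
    rw [hS, realize_theta_papp] at hs
    obtain ⟨z, hz1, hz2⟩ := hs
    have hzx : z = x := hxu' z hz1
    rw [pcode, realize_papp]
    have : z = den M (code S) := by rw [hzx, hbx]
    rwa [this] at hz2
  · intro hp
    rw [pcode, realize_papp] at hp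
    rw [hS, realize_theta_papp]
    exact ⟨den M (code S), happ, hp⟩

end LoebAux

/-- Löb's Theorem: if `Prb` obeys the derivability conditions for a theory `T` representing
every computable function, and `T ⊢ Prb(⌜A⌝) → A`, then `T ⊢ A`. -/
theorem loeb (T : L.Theory)
    (hrep : ∀ (k : ℕ) (f : (Fin k → ℕ) → ℕ), Computable f → Represents T f)
    (Prb : L.Formula (Fin 1))
    (h1 : ∀ A : L.Sentence, T ⊨ᵇ A → T ⊨ᵇ pcode Prb A)
    (h2 : ∀ A B : L.Sentence,
      T ⊨ᵇ (pcode Prb (A ⟹ B) ⟹ (pcode Prb A ⟹ pcode Prb B) : L.Sentence))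
    (h3 : ∀ A : L.Sentence,
      T ⊨ᵇ (pcode Prb A ⟹ pcode Prb (pcode Prb A) : L.Sentence))
    (A : L.Sentence) (hA : T ⊨ᵇ (pcode Prb A ⟹ A : L.Sentence)) :
    T ⊨ᵇ A := by
  classical
  obtain ⟨S, hSiff⟩ := LoebAux.diag T hrep (Prb.imp (A.relabel (fun e : Empty => e.elim)))
  have key : ∀ M : T.ModelType,
      ((M : Type) ⊨ pcode (Prb.imp (A.relabel (fun e : Empty => e.elim))) S ↔
        ((M : Type) ⊨ pcode Prb S → (M : Type) ⊨ A)) := by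
    intro M
    rw [pcode, LoebAux.realize_papp, Formula.realize_imp, pcode, LoebAux.realize_papp]
    refine imp_congr Iff.rfl ?_
    rw [Formula.realize_relabel]
    rw [show ((M : Type) ⊨ A) = Formula.Realize A (default : Empty → (M : Type)) from rfl]
    exact iff_of_eq (congrArg _ (LoebAux.empty_fun_eq _ _))
  have hiff : ∀ M : T.ModelType,
      ((M : Type) ⊨ S ↔ ((M : Type) ⊨ pcode Prb S → (M : Type) ⊨ A)) := by
    intro M
    have h := Theory.models_sentence_iff.1 hSiff M
    rw [LoebAux.sent_realize_iff] at h
    exact h.trans (key M)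
  have hX : T ⊨ᵇ (S ⟹ (pcode Prb S ⟹ A) : L.Sentence) :=
    Theory.models_sentence_iff.2 fun M => by
      rw [LoebAux.sent_realize_imp, LoebAux.sent_realize_imp]
      exact fun hs hp => (hiff M).1 hs hp
  have c1 : T ⊨ᵇ pcode Prb (S ⟹ (pcode Prb S ⟹ A)) := h1 _ hX
  have c2 : T ⊨ᵇ (pcode Prb S ⟹ pcode Prb (pcode Prb S ⟹ A) : L.Sentence) :=
    Theory.models_sentence_iff.2 fun M => by
      have h := Theory.models_sentence_iff.1 (h2 S (pcode Prb S ⟹ A)) M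
      rw [LoebAux.sent_realize_imp] at h
      exact h (Theory.models_sentence_iff.1 c1 M)
  have hPSA : T ⊨ᵇ (pcode Prb S ⟹ A : L.Sentence) :=
    Theory.models_sentence_iff.2 fun M => by
      rw [LoebAux.sent_realize_imp]
      intro hps
      have hps2 : (M : Type) ⊨ pcode Prb (pcode Prb S) := by
        have h := Theory.models_sentence_iff.1 (h3 S) M
        rw [LoebAux.sent_realize_imp] at h
        exact h hps
      have hq : (M : Type) ⊨ pcode Prb (pcode Prb S ⟹ A) := by
        have h := Theory.models_sentence_iff.1 c2 M
        rw [LoebAux.sent_realize_imp] at h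
        exact h hps
      have h := Theory.models_sentence_iff.1 (h2 (pcode Prb S) A) M
      rw [LoebAux.sent_realize_imp] at h
      have h' := h hq
      rw [LoebAux.sent_realize_imp] at h'
      have hpa := h' hps2
      have hA' := Theory.models_sentence_iff.1 hA M
      rw [LoebAux.sent_realize_imp] at hA'
      exact hA' hpa
  have hS : T ⊨ᵇ S :=
    Theory.models_sentence_iff.2 fun M => by
      refine (hiff M).2 ?_
      have h := Theory.models_sentence_iff.1 hPSA M
      rw [LoebAux.sent_realize_imp] at h
      exact h
  have hPS : T ⊨ᵇ pcode Prb S := h1 S hS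
  exact Theory.models_sentence_iff.2 fun M => by
    have h := Theory.models_sentence_iff.1 hPSA M
    rw [LoebAux.sent_realize_imp] at h
    exact h (Theory.models_sentence_iff.1 hPS M)
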